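/- arXiv:2405.17094 — 3 statements merged into one kernel-verified Lean document; each statement's English description precedes it below -/
import Mathlib

section
/- (aSGL path start for least squares.) Let X ∈ ℝ^{n×p}, y ∈ ℝ^n, and consider f(β) = (2n)^{−1}‖y − Xβ‖₂². Let λ > 0, α ∈ [0,1], and weights v_i ≥ 0, w_g ≥ 0. Then 0 is a minimizer of β ↦ f(β) + λ‖β‖_asgl if and only if for every group g, ‖S(X^{(g)⊤} y / n, λ α v^{(g)})‖₂ ≤ λ(1−α) w_g √p_g, where X^{(g)} ∈ ℝ^{n×p_g} consists of the columns of X indexed by G_g and S is applied coordinatewise with thresholds λ α v_i. -/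
open scoped BigOperators

noncomputable def asglNorm {p m : ℕ} (G : Fin m → Finset (Fin p)) (α : ℝ)
    (v : Fin p → ℝ) (w : Fin m → ℝ) (β : Fin p → ℝ) : ℝ :=
  α * ∑ i, v i * |β i| +
    (1 - α) * ∑ g, w g * Real.sqrt ((G g).card) * Real.sqrt (∑ i ∈ G g, (β i) ^ 2)

/-- Soft-thresholding operator `S(a,b) = sign(a)(|a|-b)₊`. -/
noncomputable def softThresh (a b : ℝ) : ℝ := Real.sign a * max (|a| - b) 0

private lemma softThresh_cases (a b : ℝ) :
    (0 < a ∧ softThresh a b = max (a - b) 0) ∨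
    (a = 0 ∧ softThresh a b = 0) ∨
    (a < 0 ∧ softThresh a b = -max (-a - b) 0) := by
  rcases lt_trichotomy a 0 with h | h | h
  · exact Or.inr (Or.inr ⟨h, by rw [softThresh, Real.sign_of_neg h, abs_of_neg h]; ring⟩)
  · exact Or.inr (Or.inl ⟨h, by simp [softThresh, h]⟩)
  · exact Or.inl ⟨h, by rw [softThresh, Real.sign_of_pos h, abs_of_pos h]; ring⟩

private lemma st_abs (a b : ℝ) (hb : 0 ≤ b) : |softThresh a b| = max (|a| - b) 0 := by
  rcases softThresh_cases a b with ⟨h, hs⟩ | ⟨h, hs⟩ | ⟨h, hs⟩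
  · rw [hs, abs_of_nonneg (le_max_right _ _), abs_of_pos h]
  · rw [hs, h]; simp [max_eq_right (by linarith : -b ≤ (0:ℝ))]
  · rw [hs, abs_neg, abs_of_nonneg (le_max_right _ _), abs_of_neg h]

private lemma st_key (a b : ℝ) (hb : 0 ≤ b) :
    a * softThresh a b - b * |softThresh a b| = (softThresh a b) ^ 2 := by
  rcases softThresh_cases a b with ⟨h, hs⟩ | ⟨h, hs⟩ | ⟨h, hs⟩
  · rw [st_abs a b hb, hs, abs_of_pos h]
    rcases le_total (a - b) 0 with h' | h'
    · rw [max_eq_right h']; ring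
    · rw [max_eq_left h']; ring
  · rw [hs, h]; simp
  · rw [st_abs a b hb, hs, abs_of_neg h]
    rcases le_total (-a - b) 0 with h' | h'
    · rw [max_eq_right h']; ring
    · rw [max_eq_left h']; ring

private lemma st_dist (a b : ℝ) (hb : 0 ≤ b) : |a - softThresh a b| ≤ b := by
  rcases softThresh_cases a b with ⟨h, hs⟩ | ⟨h, hs⟩ | ⟨h, hs⟩
  · rw [hs]
    rcases le_total (a - b) 0 with h' | h'
    · rw [max_eq_right h', sub_zero, abs_of_pos h]; linarith
    · rw [max_eq_left h']
      rw [show a - (a - b) = b by ring, abs_of_nonneg hb]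
  · rw [hs, h, sub_zero, abs_zero]; exact hb
  · rw [hs]
    rcases le_total (-a - b) 0 with h' | h'
    · rw [max_eq_right h', neg_zero, sub_zero, abs_of_neg h]; linarith
    · rw [max_eq_left h', show a - -(-a - b) = -b by ring, abs_neg, abs_of_nonneg hb]


private lemma cs_sum {p : ℕ} (T : Finset (Fin p)) (s b : Fin p → ℝ) :
    ∑ i ∈ T, s i * b i ≤
      Real.sqrt (∑ i ∈ T, (s i) ^ 2) * Real.sqrt (∑ i ∈ T, (b i) ^ 2) := by
  calc ∑ i ∈ T, s i * b i ≤ |∑ i ∈ T, s i * b i| := le_abs_self _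
    _ = Real.sqrt ((∑ i ∈ T, s i * b i) ^ 2) := (Real.sqrt_sq_eq_abs _).symm
    _ ≤ Real.sqrt ((∑ i ∈ T, (s i) ^ 2) * ∑ i ∈ T, (b i) ^ 2) :=
        Real.sqrt_le_sqrt (Finset.sum_mul_sq_le_sq_mul_sq T s b)
    _ = _ := Real.sqrt_mul (Finset.sum_nonneg fun i _ => sq_nonneg _) _

private lemma dual_iff_groups
    (p m : ℕ) (G : Fin m → Finset (Fin p))
    (hpart : ∀ i : Fin p, ∃! g : Fin m, i ∈ G g)
    (α lam : ℝ) (hα0 : 0 ≤ α) (hα1 : α ≤ 1) (hlam : 0 < lam)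
    (v : Fin p → ℝ) (hv : ∀ i, 0 ≤ v i)
    (w : Fin m → ℝ) (hw : ∀ g, 0 ≤ w g)
    (c : Fin p → ℝ) :
    (∀ b : Fin p → ℝ, ∑ i, c i * b i ≤ lam * asglNorm G α v w b) ↔
    (∀ g : Fin m,
      Real.sqrt (∑ i ∈ G g, (softThresh (c i) (lam * α * v i)) ^ 2)
        ≤ lam * (1 - α) * w g * Real.sqrt ((G g).card)) := by
  have hτ : ∀ i, 0 ≤ lam * α * v i :=
    fun i => mul_nonneg (mul_nonneg hlam.le hα0) (hv i)
  set s : Fin p → ℝ := fun i => softThresh (c i) (lam * α * v i) with hsdef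
  set K : Fin m → ℝ := fun g => lam * (1 - α) * w g * Real.sqrt ((G g).card) with hKdef
  have hK : ∀ g, 0 ≤ K g := fun g =>
    mul_nonneg (mul_nonneg (mul_nonneg hlam.le (by linarith)) (hw g)) (Real.sqrt_nonneg _)
  set gr : Fin p → Fin m := fun i => (hpart i).choose with hgrdef
  have hmem : ∀ (i : Fin p) (g : Fin m), i ∈ G g ↔ gr i = g := by
    intro i g
    constructor
    · intro h
      exact ((hpart i).choose_spec.2 g h).symm
    · intro h
      rw [← h]
      exact (hpart i).choose_spec.1
  have groupSum : ∀ t : Fin p → ℝ, ∑ i, t i = ∑ g, ∑ i ∈ G g, t i := by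
    intro t
    rw [← Finset.sum_fiberwise Finset.univ gr t]
    refine Finset.sum_congr rfl fun g _ => ?_
    refine Finset.sum_congr ?_ fun _ _ => rfl
    ext i
    simp [hmem i g]
  have Ndecomp : ∀ b : Fin p → ℝ, lam * asglNorm G α v w b
      = ∑ g, ((∑ i ∈ G g, (lam * α * v i) * |b i|)
          + K g * Real.sqrt (∑ i ∈ G g, (b i) ^ 2)) := by
    intro b
    have e1 : lam * asglNorm G α v w b
        = (∑ i, (lam * α * v i) * |b i|)
          + ∑ g, K g * Real.sqrt (∑ i ∈ G g, (b i) ^ 2) := by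
      unfold asglNorm
      rw [show ∑ i, (lam * α * v i) * |b i| = (lam * α) * ∑ i, v i * |b i| by
        rw [Finset.mul_sum]; exact Finset.sum_congr rfl fun i _ => by ring]
      rw [show ∑ g, K g * Real.sqrt (∑ i ∈ G g, (b i) ^ 2)
          = (lam * (1 - α)) * ∑ g, w g * Real.sqrt ((G g).card)
              * Real.sqrt (∑ i ∈ G g, (b i) ^ 2) by
        rw [Finset.mul_sum]; exact Finset.sum_congr rfl fun g _ => by rw [hKdef]; ring]
      ring
    rw [e1, groupSum (fun i => (lam * α * v i) * |b i|), ← Finset.sum_add_distrib]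
  constructor
  · -- Q → R
    intro hQ g
    set b : Fin p → ℝ := fun i => if i ∈ G g then s i else 0 with hbdef
    have hbg : ∀ i ∈ G g, b i = s i := fun i hi => by simp [hbdef, hi]
    have hbng : ∀ g', g' ≠ g → ∀ i ∈ G g', b i = 0 := by
      intro g' hne i hi
      have h1 := (hmem i g').mp hi
      have hnig : i ∉ G g := by
        intro hig
        exact hne (by rw [← h1, (hmem i g).mp hig])
      simp [hbdef, hnig]
    have h := hQ b
    rw [Ndecomp b] at h
    have eL : ∑ i, c i * b i = ∑ i ∈ G g, c i * s i := by
      simp only [hbdef, mul_ite, mul_zero]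
      rw [Finset.sum_ite_mem, Finset.univ_inter]
    have eR : ∑ g', ((∑ i ∈ G g', (lam * α * v i) * |b i|)
          + K g' * Real.sqrt (∑ i ∈ G g', (b i) ^ 2))
        = (∑ i ∈ G g, (lam * α * v i) * |s i|)
          + K g * Real.sqrt (∑ i ∈ G g, (s i) ^ 2) := by
      rw [Finset.sum_eq_single g]
      · congr 1
        · exact Finset.sum_congr rfl fun i hi => by rw [hbg i hi]
        · congr 2
          exact Finset.sum_congr rfl fun i hi => by rw [hbg i hi]
      · intro g' _ hne
        rw [Finset.sum_eq_zero (fun i hi => by rw [hbng g' hne i hi]; simp),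
            Finset.sum_eq_zero (fun i hi => by rw [hbng g' hne i hi]; ring)]
        simp
      · intro hg; exact absurd (Finset.mem_univ g) hg
    rw [eL, eR] at h
    have hsum : ∑ i ∈ G g, (c i * s i - (lam * α * v i) * |s i|)
        = ∑ i ∈ G g, (s i) ^ 2 :=
      Finset.sum_congr rfl fun i _ => st_key (c i) (lam * α * v i) (hτ i)
    rw [Finset.sum_sub_distrib] at hsum
    have hnn : (0:ℝ) ≤ ∑ i ∈ G g, (s i) ^ 2 :=
      Finset.sum_nonneg fun i _ => sq_nonneg _
    have hSS : Real.sqrt (∑ i ∈ G g, (s i) ^ 2) ^ 2 = ∑ i ∈ G g, (s i) ^ 2 :=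
      Real.sq_sqrt hnn
    have hkey : Real.sqrt (∑ i ∈ G g, (s i) ^ 2) ^ 2
        ≤ K g * Real.sqrt (∑ i ∈ G g, (s i) ^ 2) := by
      rw [hSS]; linarith
    have hfin : Real.sqrt (∑ i ∈ G g, (s i) ^ 2) ≤ K g := by
      nlinarith [Real.sqrt_nonneg (∑ i ∈ G g, (s i) ^ 2), hK g, hkey]
    exact hfin
  · -- R → Q
    intro hR b
    rw [groupSum (fun i => c i * b i), Ndecomp b]
    refine Finset.sum_le_sum fun g _ => ?_
    have h1 : ∀ i ∈ G g, c i * b i ≤ (lam * α * v i) * |b i| + s i * b i := by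
      intro i _
      have hd := st_dist (c i) (lam * α * v i) (hτ i)
      calc c i * b i = (c i - s i) * b i + s i * b i := by ring
        _ ≤ |(c i - s i) * b i| + s i * b i := by
            linarith [le_abs_self ((c i - s i) * b i)]
        _ ≤ (lam * α * v i) * |b i| + s i * b i := by
            rw [abs_mul]
            have := mul_le_mul_of_nonneg_right hd (abs_nonneg (b i))
            linarith
    have h2 : ∑ i ∈ G g, s i * b i ≤ K g * Real.sqrt (∑ i ∈ G g, (b i) ^ 2) := by
      calc ∑ i ∈ G g, s i * b i
          ≤ Real.sqrt (∑ i ∈ G g, (s i) ^ 2) * Real.sqrt (∑ i ∈ G g, (b i) ^ 2) :=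
            cs_sum (G g) s b
        _ ≤ K g * Real.sqrt (∑ i ∈ G g, (b i) ^ 2) :=
            mul_le_mul_of_nonneg_right (hR g) (Real.sqrt_nonneg _)
    calc ∑ i ∈ G g, c i * b i
        ≤ ∑ i ∈ G g, ((lam * α * v i) * |b i| + s i * b i) := Finset.sum_le_sum h1
      _ = (∑ i ∈ G g, (lam * α * v i) * |b i|) + ∑ i ∈ G g, s i * b i :=
          Finset.sum_add_distrib
      _ ≤ _ := by linarith

/-- aSGL path start for least squares: `0` minimizes `(2n)⁻¹‖y - Xβ‖₂² + λ‖β‖_asgl` iff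
for every group `g`, `‖S(X^{(g)⊤}y/n, λαv^{(g)})‖₂ ≤ λ(1-α)w_g√p_g`. -/
theorem asgl_path_start_least_squares
    (n p m : ℕ) (X : Fin n → Fin p → ℝ) (y : Fin n → ℝ)
    (G : Fin m → Finset (Fin p))
    (hpart : ∀ i : Fin p, ∃! g : Fin m, i ∈ G g)
    (α : ℝ) (hα : α ∈ Set.Icc (0:ℝ) 1)
    (lam : ℝ) (hlam : 0 < lam)
    (v : Fin p → ℝ) (hv : ∀ i, 0 ≤ v i)
    (w : Fin m → ℝ) (hw : ∀ g, 0 ≤ w g)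
    (f : (Fin p → ℝ) → ℝ)
    (hf : f = fun β => (2 * (n : ℝ))⁻¹ * ∑ j, (y j - ∑ i, X j i * β i) ^ 2) :
    (∀ b : Fin p → ℝ,
        f 0 + lam * asglNorm G α v w 0 ≤ f b + lam * asglNorm G α v w b) ↔
    (∀ g : Fin m,
      Real.sqrt (∑ i ∈ G g,
          (softThresh ((∑ j, X j i * y j) / n) (lam * α * v i)) ^ 2)
        ≤ lam * (1 - α) * w g * Real.sqrt ((G g).card)) := by
  obtain ⟨hα0, hα1⟩ := hα
  have Nnn : ∀ b, 0 ≤ asglNorm G α v w b := by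
    intro b
    unfold asglNorm
    apply add_nonneg
    · exact mul_nonneg hα0 (Finset.sum_nonneg fun i _ =>
        mul_nonneg (hv i) (abs_nonneg _))
    · exact mul_nonneg (by linarith) (Finset.sum_nonneg fun g _ =>
        mul_nonneg (mul_nonneg (hw g) (Real.sqrt_nonneg _)) (Real.sqrt_nonneg _))
  have N0 : asglNorm G α v w 0 = 0 := by
    unfold asglNorm; simp
  have fval : ∀ b : Fin p → ℝ,
      f b = (2 * (n : ℝ))⁻¹ * ∑ j, (y j - ∑ i, X j i * b i) ^ 2 := by
    intro b; simp only [hf]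
  have f0 : f 0 = (2 * (n : ℝ))⁻¹ * ∑ j, (y j) ^ 2 := by
    simp [hf]
  have PQ : (∀ b : Fin p → ℝ,
        f 0 + lam * asglNorm G α v w 0 ≤ f b + lam * asglNorm G α v w b)
      ↔ (∀ b : Fin p → ℝ,
        ∑ i, (∑ j, X j i * y j) / (n:ℝ) * b i ≤ lam * asglNorm G α v w b) := by
    rcases Nat.eq_zero_or_pos n with hn | hn
    · subst hn
      constructor
      · intro _ b
        calc ∑ i, (∑ j, X j i * y j) / ((0:ℕ):ℝ) * b i = 0 := by simp
          _ ≤ lam * asglNorm G α v w b := mul_nonneg hlam.le (Nnn b)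
      · intro _ b
        have hb0 : f b = 0 := by rw [fval b]; simp
        have h00 : f 0 = 0 := by rw [f0]; simp
        rw [hb0, h00, N0]
        have := mul_nonneg hlam.le (Nnn b)
        linarith
    · have hnR : (0:ℝ) < n := by exact_mod_cast hn
      have hne : (n:ℝ) ≠ 0 := hnR.ne'
      have hswap : ∀ b : Fin p → ℝ,
          ∑ j, y j * ∑ i, X j i * b i
            = (n:ℝ) * ∑ i, (∑ j, X j i * y j) / (n:ℝ) * b i := by
        intro b
        calc ∑ j, y j * ∑ i, X j i * b i
            = ∑ j, ∑ i, y j * (X j i * b i) := by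
              exact Finset.sum_congr rfl fun j _ => Finset.mul_sum _ _ _
          _ = ∑ i, ∑ j, y j * (X j i * b i) := Finset.sum_comm
          _ = ∑ i, (∑ j, X j i * y j) * b i := by
              refine Finset.sum_congr rfl fun i _ => ?_
              rw [Finset.sum_mul]
              exact Finset.sum_congr rfl fun j _ => by ring
          _ = ∑ i, (n:ℝ) * ((∑ j, X j i * y j) / (n:ℝ) * b i) := by
              refine Finset.sum_congr rfl fun i _ => ?_
              field_simp
          _ = (n:ℝ) * ∑ i, (∑ j, X j i * y j) / (n:ℝ) * b i := by
              rw [Finset.mul_sum]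
      have fexp : ∀ b : Fin p → ℝ,
          f b = f 0 - ∑ i, (∑ j, X j i * y j) / (n:ℝ) * b i
            + (2 * (n:ℝ))⁻¹ * ∑ j, (∑ i, X j i * b i) ^ 2 := by
        intro b
        rw [fval b, f0]
        have h1 : ∑ j, (y j - ∑ i, X j i * b i) ^ 2
            = ∑ j, (y j) ^ 2 - 2 * ∑ j, y j * ∑ i, X j i * b i
              + ∑ j, (∑ i, X j i * b i) ^ 2 := by
          rw [Finset.mul_sum, ← Finset.sum_sub_distrib, ← Finset.sum_add_distrib]
          exact Finset.sum_congr rfl fun j _ => by ring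
        rw [h1, hswap b]
        field_simp
      constructor
      · intro hP b
        set S := ∑ i, (∑ j, X j i * y j) / (n:ℝ) * b i with hS
        set Nb := asglNorm G α v w b with hNb
        set A := (2 * (n:ℝ))⁻¹ * ∑ j, (∑ i, X j i * b i) ^ 2 with hA
        have hA0 : 0 ≤ A := by
          rw [hA]
          exact mul_nonneg (by positivity) (Finset.sum_nonneg fun j _ => sq_nonneg _)
        have Nhom : ∀ t : ℝ, 0 ≤ t →
            asglNorm G α v w (fun i => t * b i) = t * Nb := by
          intro t ht
          rw [hNb]
          unfold asglNorm
          have e1 : ∑ i, v i * |t * b i| = t * ∑ i, v i * |b i| := by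
            rw [Finset.mul_sum]
            exact Finset.sum_congr rfl fun i _ => by
              rw [abs_mul, abs_of_nonneg ht]; ring
          have e2 : ∀ g : Fin m, Real.sqrt (∑ i ∈ G g, (t * b i) ^ 2)
              = t * Real.sqrt (∑ i ∈ G g, (b i) ^ 2) := by
            intro g
            rw [show ∑ i ∈ G g, (t * b i) ^ 2 = t ^ 2 * ∑ i ∈ G g, (b i) ^ 2 by
              rw [Finset.mul_sum]; exact Finset.sum_congr rfl fun i _ => by ring]
            rw [Real.sqrt_mul (sq_nonneg t), Real.sqrt_sq ht]
          have e3 : ∑ g, w g * Real.sqrt ((G g).card)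
                * Real.sqrt (∑ i ∈ G g, (t * b i) ^ 2)
              = t * ∑ g, w g * Real.sqrt ((G g).card)
                * Real.sqrt (∑ i ∈ G g, (b i) ^ 2) := by
            rw [Finset.mul_sum]
            refine Finset.sum_congr rfl fun g _ => ?_
            rw [e2 g]; ring
          rw [e1, e3]; ring
        have step : ∀ t : ℝ, 0 < t → S ≤ lam * Nb + t * A := by
          intro t ht
          have h := hP (fun i => t * b i)
          rw [fexp (fun i => t * b i), N0, Nhom t ht.le] at h
          have e1 : ∑ i, (∑ j, X j i * y j) / (n:ℝ) * (t * b i) = t * S := by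
            rw [hS, Finset.mul_sum]
            exact Finset.sum_congr rfl fun i _ => by ring
          have e2 : (2 * (n:ℝ))⁻¹ * ∑ j, (∑ i, X j i * (t * b i)) ^ 2
              = t ^ 2 * A := by
            rw [hA]
            have : ∀ j, (∑ i, X j i * (t * b i)) ^ 2
                = t ^ 2 * (∑ i, X j i * b i) ^ 2 := by
              intro j
              rw [show ∑ i, X j i * (t * b i) = t * ∑ i, X j i * b i by
                rw [Finset.mul_sum]; exact Finset.sum_congr rfl fun i _ => by ring]
              ring
            simp_rw [this]
            rw [Finset.mul_sum, Finset.mul_sum]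
            rw [show ∑ j, (2 * (n:ℝ))⁻¹ * (t ^ 2 * (∑ i, X j i * b i) ^ 2)
                = ∑ j, t ^ 2 * ((2 * (n:ℝ))⁻¹ * (∑ i, X j i * b i) ^ 2) from
              Finset.sum_congr rfl fun j _ => by ring]
            rw [← Finset.mul_sum, ← Finset.mul_sum]
          rw [e1, e2] at h
          have h' : t * S ≤ t * (lam * Nb + t * A) := by nlinarith [h]
          exact (mul_le_mul_iff_right₀ ht).mp h'
        by_contra hcon
        push_neg at hcon
        rcases hA0.eq_or_lt with h0 | h0
        · have h1 := step 1 one_pos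
          rw [← h0, mul_zero, add_zero] at h1
          exact absurd h1 (not_le.mpr hcon)
        · have h1 := step ((S - lam * Nb) / (2 * A)) (div_pos (by linarith) (by linarith))
          have h2 : (S - lam * Nb) / (2 * A) * A = (S - lam * Nb) / 2 := by
            field_simp
          rw [h2] at h1
          linarith
      · intro hQ b
        rw [fexp b, N0, mul_zero, add_zero]
        have h1 := hQ b
        have h2 : 0 ≤ (2 * (n:ℝ))⁻¹ * ∑ j, (∑ i, X j i * b i) ^ 2 :=
          mul_nonneg (by positivity) (Finset.sum_nonneg fun j _ => sq_nonneg _)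
        linarith
  exact PQ.trans (dual_iff_groups p m G hpart α lam hα0 hα1 hlam v hv w hw
    (fun i => (∑ j, X j i * y j) / (n:ℝ)))
end

section
/- (Well-definedness of the ε-norm.) Let k ≥ 1, ε ∈ (0,1], and x ∈ ℝ^k with x ≠ 0. Then there exists a unique q > 0 such that ∑_{i=1}^k ((|x_i| − (1−ε)q)₊)² = (ε q)², where (t)₊ = max(t,0); moreover for x = 0 the unique nonnegative solution is q = 0. The value ‖x‖_ε := q thus defines a well-defined nonnegative function on ℝ^k. -/
open scoped BigOperators

/-- Well-definedness of the ε-norm: for `x ≠ 0` there is a unique `q > 0` solving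
Burdakov's equation, and for `x = 0` the unique nonnegative solution is `q = 0`. -/
theorem e_norm_well_defined (k : ℕ) (hk : 1 ≤ k) (ε : ℝ) (hε : ε ∈ Set.Ioc (0:ℝ) 1) :
    (∀ x : Fin k → ℝ, x ≠ 0 →
      ∃! q : ℝ, 0 < q ∧
        ∑ i, (max (|x i| - (1 - ε) * q) 0) ^ 2 = (ε * q) ^ 2) ∧
    (∀ q : ℝ,
      (0 ≤ q ∧ ∑ _i : Fin k, (max (|(0:ℝ)| - (1 - ε) * q) 0) ^ 2 = (ε * q) ^ 2) ↔
        q = 0) := by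
  obtain ⟨hε0, hε1⟩ := hε
  have h1ε : (0:ℝ) ≤ 1 - ε := by linarith
  constructor
  · intro x hx
    set S : ℝ → ℝ := fun q => ∑ i, (max (|x i| - (1 - ε) * q) 0) ^ 2 with hS
    have hSnonneg : ∀ q, 0 ≤ S q := fun q =>
      Finset.sum_nonneg fun i _ => sq_nonneg _
    -- S is antitone on nonneg
    have hSanti : ∀ a b : ℝ, 0 ≤ a → a ≤ b → S b ≤ S a := by
      intro a b ha hab
      apply Finset.sum_le_sum
      intro i _
      have h1 : (1 - ε) * a ≤ (1 - ε) * b := by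
        apply mul_le_mul_of_nonneg_left hab h1ε
      have h2 : max (|x i| - (1 - ε) * b) 0 ≤ max (|x i| - (1 - ε) * a) 0 :=
        max_le_max (by linarith) le_rfl
      exact pow_le_pow_left₀ (le_max_right _ _) h2 2
    set h : ℝ → ℝ := fun q => Real.sqrt (S q) - ε * q with hh
    have hcont : Continuous h := by
      apply Continuous.sub
      · apply Real.continuous_sqrt.comp
        apply continuous_finset_sum
        intro i _
        exact ((continuous_const.sub (continuous_const.mul continuous_id)).max
          continuous_const).pow 2
      · exact continuous_const.mul continuous_id
    have hS0 : S 0 = ∑ i, (x i) ^ 2 := by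
      apply Finset.sum_congr rfl
      intro i _
      rw [mul_zero, sub_zero, max_eq_left (abs_nonneg _), sq_abs]
    have hS0pos : 0 < S 0 := by
      rw [hS0]
      have : ∃ i, x i ≠ 0 := by
        by_contra h'
        push_neg at h'
        exact hx (funext h')
      obtain ⟨i, hi⟩ := this
      apply Finset.sum_pos' (fun j _ => sq_nonneg _)
      exact ⟨i, Finset.mem_univ i, by positivity⟩
    have hh0 : 0 < h 0 := by
      simp only [hh, mul_zero, sub_zero]
      exact Real.sqrt_pos.mpr hS0pos
    set M : ℝ := Real.sqrt (S 0) / ε with hM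
    have hMpos : 0 < M := div_pos (Real.sqrt_pos.mpr hS0pos) hε0
    have hhM : h M ≤ 0 := by
      have hSM : S M ≤ S 0 := hSanti 0 M le_rfl hMpos.le
      have : Real.sqrt (S M) ≤ Real.sqrt (S 0) := Real.sqrt_le_sqrt hSM
      have hεM : ε * M = Real.sqrt (S 0) := by
        rw [hM]; field_simp [hε0.ne']
      simp only [hh]
      rw [hεM]
      linarith
    -- strict antitonicity of h on [0,∞)
    have hanti : ∀ a b : ℝ, 0 ≤ a → a < b → h b < h a := by
      intro a b ha hab
      have h1 : Real.sqrt (S b) ≤ Real.sqrt (S a) :=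
        Real.sqrt_le_sqrt (hSanti a b ha hab.le)
      have h2 : ε * a < ε * b := by
        apply mul_lt_mul_of_pos_left hab hε0
      simp only [hh]
      linarith
    -- existence of root via IVT
    have hivt := intermediate_value_Icc' hMpos.le hcont.continuousOn
    have h0mem : (0:ℝ) ∈ Set.Icc (h M) (h 0) := ⟨hhM, hh0.le⟩
    obtain ⟨q, hqmem, hq⟩ := hivt h0mem
    have hqpos : 0 < q := by
      rcases lt_or_eq_of_le hqmem.1 with h' | h'
      · exact h'
      · exfalso; rw [← h'] at hq; linarith
    have key : ∀ r : ℝ, 0 < r → (S r = (ε * r) ^ 2 ↔ h r = 0) := by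
      intro r hr
      constructor
      · intro he
        simp only [hh, he, Real.sqrt_sq (by positivity : (0:ℝ) ≤ ε * r), sub_self]
      · intro he
        have : Real.sqrt (S r) = ε * r := by simp only [hh] at he; linarith
        have := congrArg (fun t => t ^ 2) this
        simpa [Real.sq_sqrt (hSnonneg r)] using this
    refine ⟨q, ⟨hqpos, (key q hqpos).mpr hq⟩, ?_⟩
    rintro r ⟨hrpos, hre⟩
    have hr0 : h r = 0 := (key r hrpos).mp hre
    by_contra hne
    rcases lt_or_gt_of_ne hne with h' | h'
    · have := hanti r q hrpos.le h'
      rw [hq, hr0] at this; exact lt_irrefl _ this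
    · have := hanti q r hqpos.le h'
      rw [hq, hr0] at this; exact lt_irrefl _ this
  · intro q
    constructor
    · rintro ⟨hq0, he⟩
      have hsum : ∑ _i : Fin k, (max (|(0:ℝ)| - (1 - ε) * q) 0) ^ 2 = 0 := by
        apply Finset.sum_eq_zero
        intro i _
        have : |(0:ℝ)| - (1 - ε) * q ≤ 0 := by
          rw [abs_zero]
          have : 0 ≤ (1 - ε) * q := mul_nonneg h1ε hq0
          linarith
        rw [max_eq_right this]
        ring
      rw [hsum] at he
      have : ε * q = 0 := by
        have := pow_eq_zero_iff (n := 2) (by norm_num) |>.mp he.symm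
        exact this
      rcases mul_eq_zero.mp this with h' | h'
      · exact absurd h' (ne_of_gt hε0)
      · exact h'
    · rintro rfl
      refine ⟨le_rfl, ?_⟩
      simp
end

section
/- (Duality between the ε-norm and the ℓ¹–ℓ² combination, the key identity behind the SGL dual norm.) Let k ≥ 1 and ε ∈ (0,1]. The function N_ε(x) = (1−ε)‖x‖₁ + ε‖x‖₂ is a norm on ℝ^k, and for every z ∈ ℝ^k the unique nonnegative solution q of ∑_{i=1}^k ((|z_i| − (1−ε)q)₊)² = (ε q)² satisfies q = sup{⟨z, x⟩ : x ∈ ℝ^k, N_ε(x) ≤ 1}; that is, the ε-norm is the dual norm of N_ε. Consequently, for the SGL norm ‖β‖_sgl = ∑_{g=1}^m τ_g N_{ε_g}(β^{(g)}) with τ_g = α + (1−α)√p_g and ε_g = (τ_g − α)/τ_g, its dual norm satisfies ‖ξ‖*_sgl = max_{g=1,…,m} τ_g^{−1} ‖ξ^{(g)}‖_{ε_g}. -/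
open scoped BigOperators

noncomputable def sglNorm {p m : ℕ} (G : Fin m → Finset (Fin p)) (α : ℝ)
    (β : Fin p → ℝ) : ℝ :=
  α * ∑ i, |β i| +
    (1 - α) * ∑ g, Real.sqrt ((G g).card) * Real.sqrt (∑ i ∈ G g, (β i) ^ 2)

/-- The ℓ¹-ℓ² combination `N_ε(x) = (1-ε)‖x‖₁ + ε‖x‖₂`. -/
noncomputable def Nnorm {k : ℕ} (ε : ℝ) (x : Fin k → ℝ) : ℝ :=
  (1 - ε) * ∑ i, |x i| + ε * Real.sqrt (∑ i, (x i) ^ 2)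

/-- Cauchy–Schwarz upper bound: the Burdakov solution `q` dominates inner products
against vectors of combined ℓ¹-ℓ² norm at most one. -/
lemma eNorm_upper {ι : Type*} (s : Finset ι) (ε q : ℝ)
    (hq : 0 ≤ q) (z : ι → ℝ)
    (heq : ∑ i ∈ s, (max (|z i| - (1 - ε) * q) 0) ^ 2 = (ε * q) ^ 2) (x : ι → ℝ)
    (hε0 : 0 ≤ ε) :
    ∑ i ∈ s, z i * x i ≤
      q * ((1 - ε) * ∑ i ∈ s, |x i| + ε * Real.sqrt (∑ i ∈ s, (x i) ^ 2)) := by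
  set u := fun i => max (|z i| - (1 - ε) * q) 0 with hu
  have h1 : ∑ i ∈ s, z i * x i ≤ ∑ i ∈ s, ((1 - ε) * q * |x i| + u i * |x i|) := by
    refine Finset.sum_le_sum fun i _ => ?_
    have hzx : z i * x i ≤ |z i| * |x i| := (le_abs_self _).trans (le_of_eq (abs_mul _ _))
    have hz : |z i| ≤ (1 - ε) * q + u i := by
      have := le_max_left (|z i| - (1 - ε) * q) 0; simp only [hu]; linarith
    nlinarith [abs_nonneg (x i)]
  have h2 : ∑ i ∈ s, u i * |x i| ≤ ε * q * Real.sqrt (∑ i ∈ s, (x i) ^ 2) := by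
    have := Real.sum_mul_le_sqrt_mul_sqrt s u (fun i => |x i|)
    simp only [sq_abs] at this
    rwa [heq, Real.sqrt_sq (by positivity)] at this
  rw [Finset.sum_add_distrib, ← Finset.mul_sum] at h1
  calc ∑ i ∈ s, z i * x i ≤ (1 - ε) * q * ∑ i ∈ s, |x i| + ∑ i ∈ s, u i * |x i| := h1
    _ ≤ (1 - ε) * q * ∑ i ∈ s, |x i| + ε * q * Real.sqrt (∑ i ∈ s, (x i) ^ 2) := by linarith
    _ = q * ((1 - ε) * ∑ i ∈ s, |x i| + ε * Real.sqrt (∑ i ∈ s, (x i) ^ 2)) := by ring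

/-- Attainment: the Burdakov solution `q` is attained by a vector supported on `s`
with combined ℓ¹-ℓ² norm at most one. -/
lemma eNorm_attain {ι : Type*} [DecidableEq ι] (s : Finset ι) (ε q : ℝ)
    (hε0 : 0 < ε) (hε1 : ε ≤ 1) (hq : 0 ≤ q) (z : ι → ℝ)
    (heq : ∑ i ∈ s, (max (|z i| - (1 - ε) * q) 0) ^ 2 = (ε * q) ^ 2) :
    ∃ x : ι → ℝ, (∀ i ∉ s, x i = 0) ∧
      (1 - ε) * ∑ i ∈ s, |x i| + ε * Real.sqrt (∑ i ∈ s, (x i) ^ 2) ≤ 1 ∧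
      ∑ i ∈ s, z i * x i = q := by
  rcases eq_or_lt_of_le hq with hq0 | hq0
  · refine ⟨0, fun _ _ => rfl, ?_, ?_⟩ <;> simp [← hq0]
  set m := fun i => max (|z i| - (1 - ε) * q) 0 with hm
  have hmnn : ∀ i, 0 ≤ m i := fun i => le_max_right _ _
  set u := fun i => if i ∈ s then m i * Real.sign (z i) else 0 with hudef
  have habs : ∀ i ∈ s, |u i| = m i := by
    intro i hi
    simp only [hudef, if_pos hi]
    rcases lt_trichotomy (z i) 0 with h | h | h
    · rw [Real.sign_of_neg h]; rw [abs_mul]; simp [abs_of_nonneg (hmnn i)]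
    · have : m i = 0 := by
        simp only [hm, h, abs_zero]
        exact max_eq_right (by nlinarith)
      simp [this]
    · rw [Real.sign_of_pos h]; rw [abs_mul]; simp [abs_of_nonneg (hmnn i)]
  have hzu : ∀ i ∈ s, z i * u i = (1 - ε) * q * m i + m i ^ 2 := by
    intro i hi
    have h1 : z i * u i = |z i| * m i := by
      simp only [hudef, if_pos hi]
      rcases lt_trichotomy (z i) 0 with h | h | h
      · rw [Real.sign_of_neg h, abs_of_neg h]; ring
      · simp [h]
      · rw [Real.sign_of_pos h, abs_of_pos h]; ring
    rw [h1]
    rcases le_or_gt (|z i|) ((1 - ε) * q) with h | h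
    · have : m i = 0 := max_eq_right (by linarith)
      simp [this]
    · have : m i = |z i| - (1 - ε) * q := max_eq_left (by linarith)
      rw [this]; ring
  set S1 := ∑ i ∈ s, m i with hS1
  have hS1nn : 0 ≤ S1 := Finset.sum_nonneg fun i _ => hmnn i
  set N := (1 - ε) * S1 + ε * (ε * q) with hN
  have hNpos : 0 < N := by
    rw [hN]
    nlinarith [mul_nonneg (by linarith : (0:ℝ) ≤ 1 - ε) hS1nn, mul_pos hε0 (mul_pos hε0 hq0)]
  have husq : ∑ i ∈ s, (u i) ^ 2 = (ε * q) ^ 2 := by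
    rw [← heq]
    refine Finset.sum_congr rfl fun i hi => ?_
    rw [← sq_abs (u i), habs i hi]
  have husum : ∑ i ∈ s, |u i| = S1 := Finset.sum_congr rfl habs
  have hzusum : ∑ i ∈ s, z i * u i = q * N := by
    rw [Finset.sum_congr rfl hzu, Finset.sum_add_distrib, ← Finset.mul_sum]
    have : ∑ i ∈ s, m i ^ 2 = (ε * q) ^ 2 := heq
    rw [this, ← hS1, hN]; ring
  refine ⟨fun i => u i / N, fun i hi => by simp [hudef, if_neg hi], ?_, ?_⟩
  · have h1 : ∑ i ∈ s, |u i / N| = S1 / N := by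
      rw [← husum, Finset.sum_div]
      exact Finset.sum_congr rfl fun i _ => by rw [abs_div, abs_of_pos hNpos]
    have h2 : Real.sqrt (∑ i ∈ s, (u i / N) ^ 2) = ε * q / N := by
      have he : ∑ i ∈ s, (u i / N) ^ 2 = (ε * q) ^ 2 / N ^ 2 := by
        simp only [div_pow]; rw [← Finset.sum_div, husq]
      rw [he, Real.sqrt_div (by positivity), Real.sqrt_sq (by positivity),
        Real.sqrt_sq hNpos.le]
    rw [h1, h2]
    have key : (1 - ε) * (S1 / N) + ε * (ε * q / N) = 1 := by
      field_simp
      rw [hN]; ring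
    exact le_of_eq key
  · simp only [← mul_div_assoc]
    rw [← Finset.sum_div, hzusum, mul_div_assoc, div_self hNpos.ne', mul_one]

/-- Triangle inequality for the Euclidean part. -/
lemma sqrt_sum_sq_add {ι : Type*} (s : Finset ι) (x y : ι → ℝ) :
    Real.sqrt (∑ i ∈ s, (x i + y i) ^ 2) ≤
      Real.sqrt (∑ i ∈ s, (x i) ^ 2) + Real.sqrt (∑ i ∈ s, (y i) ^ 2) := by
  have hcs : ∑ i ∈ s, x i * y i ≤
      Real.sqrt (∑ i ∈ s, (x i) ^ 2) * Real.sqrt (∑ i ∈ s, (y i) ^ 2) :=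
    Real.sum_mul_le_sqrt_mul_sqrt s x y
  have hx : (0:ℝ) ≤ ∑ i ∈ s, (x i) ^ 2 := Finset.sum_nonneg fun i _ => sq_nonneg _
  have hy : (0:ℝ) ≤ ∑ i ∈ s, (y i) ^ 2 := Finset.sum_nonneg fun i _ => sq_nonneg _
  have hexp : ∑ i ∈ s, (x i + y i) ^ 2 =
      ∑ i ∈ s, (x i) ^ 2 + 2 * ∑ i ∈ s, x i * y i + ∑ i ∈ s, (y i) ^ 2 := by
    rw [Finset.mul_sum, ← Finset.sum_add_distrib, ← Finset.sum_add_distrib]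
    exact Finset.sum_congr rfl fun i _ => by ring
  have hsq : ∑ i ∈ s, (x i + y i) ^ 2 ≤
      (Real.sqrt (∑ i ∈ s, (x i) ^ 2) + Real.sqrt (∑ i ∈ s, (y i) ^ 2)) ^ 2 := by
    have h1 := Real.sq_sqrt hx
    have h2 := Real.sq_sqrt hy
    rw [hexp]; nlinarith [Real.sqrt_nonneg (∑ i ∈ s, (x i) ^ 2),
      Real.sqrt_nonneg (∑ i ∈ s, (y i) ^ 2)]
  calc Real.sqrt (∑ i ∈ s, (x i + y i) ^ 2)
      ≤ Real.sqrt ((Real.sqrt (∑ i ∈ s, (x i) ^ 2) + Real.sqrt (∑ i ∈ s, (y i) ^ 2)) ^ 2) :=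
        Real.sqrt_le_sqrt hsq
    _ = _ := Real.sqrt_sq (by positivity)

/-- Duality between the ε-norm and the ℓ¹-ℓ² combination: `N_ε` is a norm, the nonnegative
solution `q` of Burdakov's equation is the dual norm `sup{⟨z,x⟩ : N_ε(x) ≤ 1}`, and
consequently the dual SGL norm is `max_g τ_g⁻¹‖ξ^{(g)}‖_{ε_g}`. -/
theorem e_norm_duality (k : ℕ) (hk : 1 ≤ k) (ε : ℝ) (hε : ε ∈ Set.Ioc (0:ℝ) 1) :
    ((∀ x : Fin k → ℝ, 0 ≤ Nnorm ε x) ∧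
     (∀ x : Fin k → ℝ, Nnorm ε x = 0 ↔ x = 0) ∧
     (∀ (a : ℝ) (x : Fin k → ℝ), Nnorm ε (a • x) = |a| * Nnorm ε x) ∧
     (∀ x y : Fin k → ℝ, Nnorm ε (x + y) ≤ Nnorm ε x + Nnorm ε y)) ∧
    (∀ z : Fin k → ℝ, ∀ q : ℝ, 0 ≤ q →
      (∑ i, (max (|z i| - (1 - ε) * q) 0) ^ 2 = (ε * q) ^ 2) →
      IsLUB {r : ℝ | ∃ x : Fin k → ℝ, Nnorm ε x ≤ 1 ∧ ∑ i, z i * x i = r} q) ∧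
    (∀ (p m : ℕ) (G : Fin m → Finset (Fin p)),
      (∀ i : Fin p, ∃! g : Fin m, i ∈ G g) → (∀ g, (G g).Nonempty) →
      ∀ α : ℝ, α ∈ Set.Ico (0:ℝ) 1 →
      ∀ τ εg : Fin m → ℝ,
      (∀ g, τ g = α + (1 - α) * Real.sqrt ((G g).card)) →
      (∀ g, εg g = (τ g - α) / τ g) →
      ∀ (ξ : Fin p → ℝ) (q : Fin m → ℝ),
      (∀ g, 0 ≤ q g) →
      (∀ g, ∑ i ∈ G g, (max (|ξ i| - (1 - εg g) * q g) 0) ^ 2 = (εg g * q g) ^ 2) →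
      ∀ Q : ℝ, IsGreatest {r : ℝ | ∃ g : Fin m, r = (τ g)⁻¹ * q g} Q →
      IsLUB {r : ℝ | ∃ β : Fin p → ℝ, sglNorm G α β ≤ 1 ∧ ∑ i, ξ i * β i = r} Q) := by
  obtain ⟨hε0, hε1⟩ := hε
  refine ⟨⟨?_, ?_, ?_, ?_⟩, ?_, ?_⟩
  · -- nonnegativity
    intro x
    have h1 : (0:ℝ) ≤ ∑ i, |x i| := Finset.sum_nonneg fun i _ => abs_nonneg _
    have h2 := Real.sqrt_nonneg (∑ i, (x i) ^ 2)
    unfold Nnorm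
    nlinarith
  · -- definiteness
    intro x
    constructor
    · intro h
      have h1 : (0:ℝ) ≤ (1 - ε) * ∑ i, |x i| :=
        mul_nonneg (by linarith) (Finset.sum_nonneg fun i _ => abs_nonneg _)
      have h2 : (0:ℝ) ≤ ε * Real.sqrt (∑ i, (x i) ^ 2) :=
        mul_nonneg hε0.le (Real.sqrt_nonneg _)
      unfold Nnorm at h
      have h3 : ε * Real.sqrt (∑ i, (x i) ^ 2) = 0 := by linarith
      have h4 : Real.sqrt (∑ i, (x i) ^ 2) = 0 := by
        rcases mul_eq_zero.1 h3 with h | h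
        · exact absurd h hε0.ne'
        · exact h
      have h5 : ∑ i : Fin k, (x i) ^ 2 = 0 := by
        have hnn : (0:ℝ) ≤ ∑ i, (x i) ^ 2 := Finset.sum_nonneg fun i _ => sq_nonneg _
        exact le_antisymm (Real.sqrt_eq_zero'.1 h4) hnn
      funext i
      have := (Finset.sum_eq_zero_iff_of_nonneg (fun i _ => sq_nonneg (x i))).1 h5 i
        (Finset.mem_univ i)
      exact (pow_eq_zero_iff two_ne_zero).1 this
    · rintro rfl; simp [Nnorm]
  · -- homogeneity
    intro a x
    unfold Nnorm
    have h1 : ∑ i : Fin k, |(a • x) i| = |a| * ∑ i, |x i| := by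
      rw [Finset.mul_sum]
      exact Finset.sum_congr rfl fun i _ => by simp [abs_mul]
    have h2 : Real.sqrt (∑ i : Fin k, ((a • x) i) ^ 2) = |a| * Real.sqrt (∑ i, (x i) ^ 2) := by
      have : ∑ i : Fin k, ((a • x) i) ^ 2 = a ^ 2 * ∑ i, (x i) ^ 2 := by
        rw [Finset.mul_sum]
        exact Finset.sum_congr rfl fun i _ => by simp [mul_pow]
      rw [this, Real.sqrt_mul (sq_nonneg a), Real.sqrt_sq_eq_abs]
    rw [h1, h2]; ring
  · -- triangle inequality
    intro x y
    unfold Nnorm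
    have h1 : ∑ i : Fin k, |(x + y) i| ≤ ∑ i, |x i| + ∑ i, |y i| := by
      rw [← Finset.sum_add_distrib]
      exact Finset.sum_le_sum fun i _ => abs_add_le _ _
    have h2 := sqrt_sum_sq_add Finset.univ x y
    simp only [Pi.add_apply] at h1 h2 ⊢
    have h1' := mul_le_mul_of_nonneg_left h1 (by linarith : (0:ℝ) ≤ 1 - ε)
    have h2' := mul_le_mul_of_nonneg_left h2 hε0.le
    linarith
  · -- the ε-norm is the dual norm
    intro z q hq heq
    have hgr : IsGreatest {r : ℝ | ∃ x : Fin k → ℝ, Nnorm ε x ≤ 1 ∧ ∑ i, z i * x i = r} q := by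
      constructor
      · obtain ⟨x, -, hnorm, hsum⟩ :=
          eNorm_attain Finset.univ ε q hε0 hε1 hq z heq
        exact ⟨x, by unfold Nnorm; exact hnorm, hsum⟩
      · rintro r ⟨x, hx, rfl⟩
        have h := eNorm_upper Finset.univ ε q hq z heq x hε0.le
        have hmul : q * Nnorm ε x ≤ q * 1 := mul_le_mul_of_nonneg_left hx hq
        unfold Nnorm at hmul
        linarith
    exact hgr.isLUB
  · -- SGL dual norm
    intro p m G hpart hGne α hα τ εg hτ hεg ξ q hqnn hqeq Q hQ
    obtain ⟨hα0, hα1⟩ := hα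
    -- basic facts
    have hsqrt1 : ∀ g, (1:ℝ) ≤ Real.sqrt ((G g).card) := by
      intro g
      rw [show (1:ℝ) = Real.sqrt 1 by simp]
      apply Real.sqrt_le_sqrt
      exact_mod_cast Finset.card_pos.2 (hGne g)
    have hτ1 : ∀ g, (1:ℝ) ≤ τ g := by
      intro g; rw [hτ g]; nlinarith [hsqrt1 g]
    have hτpos : ∀ g, (0:ℝ) < τ g := fun g => lt_of_lt_of_le one_pos (hτ1 g)
    have hεgpos : ∀ g, 0 < εg g := by
      intro g; rw [hεg g]
      apply div_pos _ (hτpos g)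
      rw [hτ g]; nlinarith [hsqrt1 g]
    have hεgle : ∀ g, εg g ≤ 1 := by
      intro g; rw [hεg g, div_le_one (hτpos g)]; linarith
    have h1sub : ∀ g, 1 - εg g = α / τ g := by
      intro g; rw [hεg g, sub_div, div_self (hτpos g).ne']; ring
    have hτε : ∀ g, τ g * εg g = (1 - α) * Real.sqrt ((G g).card) := by
      intro g; rw [hεg g, mul_div_cancel₀ _ (hτpos g).ne', hτ g]; ring
    have hτ1sub : ∀ g, τ g * (1 - εg g) = α := by
      intro g; rw [h1sub g, mul_div_cancel₀ _ (hτpos g).ne']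
    -- classifying map of the partition
    have hGdisj : ∀ (i : Fin p) (g g' : Fin m), i ∈ G g → i ∈ G g' → g = g' := by
      intro i g g' hg hg'
      obtain ⟨g₀, -, hu⟩ := hpart i
      rw [hu g hg, hu g' hg']
    have hpartsum : ∀ f : Fin p → ℝ, ∑ i, f i = ∑ g, ∑ i ∈ G g, f i := by
      intro f
      classical
      set c : Fin p → Fin m := fun i => (hpart i).choose with hc
      have hmemc : ∀ i g, i ∈ G g ↔ c i = g := by
        intro i g
        constructor
        · intro h; exact ((hpart i).choose_spec.2 g h).symm
        · rintro rfl; exact (hpart i).choose_spec.1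
      have hGfib : ∀ g, G g = Finset.univ.filter (fun i => c i = g) := by
        intro g; ext i; simp [hmemc i g]
      rw [← Finset.sum_fiberwise_of_maps_to (g := c) (t := Finset.univ)
        (fun i _ => Finset.mem_univ _) f]
      exact Finset.sum_congr rfl fun g _ => by rw [hGfib g]
    -- group norms
    set Ng : Fin m → (Fin p → ℝ) → ℝ := fun g β =>
      (1 - εg g) * ∑ i ∈ G g, |β i| + εg g * Real.sqrt (∑ i ∈ G g, (β i) ^ 2) with hNg
    have hNgnn : ∀ g β, 0 ≤ Ng g β := by
      intro g β
      apply add_nonneg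
      · exact mul_nonneg (by linarith [hεgle g])
          (Finset.sum_nonneg fun i _ => abs_nonneg _)
      · exact mul_nonneg (hεgpos g).le (Real.sqrt_nonneg _)
    have hsgl : ∀ β, sglNorm G α β = ∑ g, τ g * Ng g β := by
      intro β
      unfold sglNorm
      rw [hpartsum (fun i => |β i|), Finset.mul_sum, Finset.mul_sum,
        ← Finset.sum_add_distrib]
      refine Finset.sum_congr rfl fun g _ => ?_
      rw [hNg]
      have : τ g * ((1 - εg g) * ∑ i ∈ G g, |β i|
          + εg g * Real.sqrt (∑ i ∈ G g, (β i) ^ 2))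
          = (τ g * (1 - εg g)) * ∑ i ∈ G g, |β i|
          + (τ g * εg g) * Real.sqrt (∑ i ∈ G g, (β i) ^ 2) := by ring
      rw [this, hτ1sub g, hτε g]; ring
    have hQ0 : 0 ≤ Q := by
      obtain ⟨g0, hg0⟩ := hQ.1
      rw [hg0]
      exact mul_nonneg (inv_nonneg.2 (hτpos g0).le) (hqnn g0)
    have hgr : IsGreatest
        {r : ℝ | ∃ β : Fin p → ℝ, sglNorm G α β ≤ 1 ∧ ∑ i, ξ i * β i = r} Q := by
      constructor
      · -- attainment
        obtain ⟨g0, hg0⟩ := hQ.1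
        obtain ⟨x, hx0, hxnorm, hxsum⟩ :=
          eNorm_attain (G g0) (εg g0) (q g0) (hεgpos g0) (hεgle g0) (hqnn g0) ξ (hqeq g0)
        refine ⟨fun i => x i / τ g0, ?_, ?_⟩
        · rw [hsgl]
          have hzero : ∀ g ∈ Finset.univ, g ≠ g0 → τ g * Ng g (fun i => x i / τ g0) = 0 := by
            intro g _ hgne
            have hβ0 : ∀ i ∈ G g, x i / τ g0 = 0 := by
              intro i hi
              have : i ∉ G g0 := fun h => hgne (hGdisj i g g0 hi h)
              rw [hx0 i this, zero_div]
            have h1 : ∑ i ∈ G g, |x i / τ g0| = 0 :=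
              Finset.sum_eq_zero fun i hi => by rw [hβ0 i hi, abs_zero]
            have h2 : ∑ i ∈ G g, (x i / τ g0) ^ 2 = 0 :=
              Finset.sum_eq_zero fun i hi => by rw [hβ0 i hi]; ring
            rw [hNg]
            simp only [h1, h2, Real.sqrt_zero, mul_zero, add_zero, mul_zero]
          rw [Finset.sum_eq_single_of_mem g0 (Finset.mem_univ g0) hzero]
          have hdiv1 : ∑ i ∈ G g0, |x i / τ g0| = (∑ i ∈ G g0, |x i|) / τ g0 := by
            rw [Finset.sum_div]
            exact Finset.sum_congr rfl fun i _ => by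
              rw [abs_div, abs_of_pos (hτpos g0)]
          have hdiv2 : Real.sqrt (∑ i ∈ G g0, (x i / τ g0) ^ 2)
              = Real.sqrt (∑ i ∈ G g0, (x i) ^ 2) / τ g0 := by
            have : ∑ i ∈ G g0, (x i / τ g0) ^ 2
                = (∑ i ∈ G g0, (x i) ^ 2) / (τ g0) ^ 2 := by
              simp only [div_pow]; rw [← Finset.sum_div]
            rw [this, Real.sqrt_div (Finset.sum_nonneg fun i _ => sq_nonneg _),
              Real.sqrt_sq (hτpos g0).le]
          simp only [hNg]
          rw [hdiv1, hdiv2]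
          have hkey : τ g0 * ((1 - εg g0) * ((∑ i ∈ G g0, |x i|) / τ g0)
              + εg g0 * (Real.sqrt (∑ i ∈ G g0, (x i) ^ 2) / τ g0))
              = (1 - εg g0) * ∑ i ∈ G g0, |x i|
              + εg g0 * Real.sqrt (∑ i ∈ G g0, (x i) ^ 2) := by
            field_simp
            rw [mul_comm, mul_div_assoc, div_self (hτpos g0).ne', mul_one]
          rw [hkey]
          exact hxnorm
        · rw [hpartsum (fun i => ξ i * (x i / τ g0))]
          have hzero : ∀ g ∈ Finset.univ, g ≠ g0 →
              ∑ i ∈ G g, ξ i * (x i / τ g0) = 0 := by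
            intro g _ hgne
            refine Finset.sum_eq_zero fun i hi => ?_
            have : i ∉ G g0 := fun h => hgne (hGdisj i g g0 hi h)
            rw [hx0 i this, zero_div, mul_zero]
          rw [Finset.sum_eq_single_of_mem g0 (Finset.mem_univ g0) hzero]
          have : ∑ i ∈ G g0, ξ i * (x i / τ g0) = (∑ i ∈ G g0, ξ i * x i) / τ g0 := by
            rw [Finset.sum_div]
            exact Finset.sum_congr rfl fun i _ => by ring
          rw [this, hxsum, hg0, inv_mul_eq_div]
      · -- upper bound
        rintro r ⟨β, hβ, rfl⟩
        have hub : ∀ g, ∑ i ∈ G g, ξ i * β i ≤ Q * (τ g * Ng g β) := by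
          intro g
          have h1 : ∑ i ∈ G g, ξ i * β i ≤ q g * Ng g β := by
            rw [hNg]
            exact eNorm_upper (G g) (εg g) (q g) (hqnn g) ξ (hqeq g) β (hεgpos g).le
          have h2 : q g * Ng g β = ((τ g)⁻¹ * q g) * (τ g * Ng g β) := by
            have hinv : (τ g)⁻¹ * τ g = 1 := inv_mul_cancel₀ (hτpos g).ne'
            calc q g * Ng g β = ((τ g)⁻¹ * τ g) * (q g * Ng g β) := by rw [hinv, one_mul]
              _ = ((τ g)⁻¹ * q g) * (τ g * Ng g β) := by ring
          have h3 : (τ g)⁻¹ * q g ≤ Q := hQ.2 ⟨g, rfl⟩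
          have h4 : 0 ≤ τ g * Ng g β := mul_nonneg (hτpos g).le (hNgnn g β)
          calc ∑ i ∈ G g, ξ i * β i ≤ q g * Ng g β := h1
            _ = ((τ g)⁻¹ * q g) * (τ g * Ng g β) := h2
            _ ≤ Q * (τ g * Ng g β) := mul_le_mul_of_nonneg_right h3 h4
        calc ∑ i, ξ i * β i = ∑ g, ∑ i ∈ G g, ξ i * β i :=
              hpartsum (fun i => ξ i * β i)
          _ ≤ ∑ g, Q * (τ g * Ng g β) := Finset.sum_le_sum fun g _ => hub g
          _ = Q * ∑ g, τ g * Ng g β := by rw [Finset.mul_sum]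
          _ = Q * sglNorm G α β := by rw [hsgl]
          _ ≤ Q * 1 := mul_le_mul_of_nonneg_left hβ hQ0
          _ = Q := mul_one Q
    exact hgr.isLUB
end
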